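/- arXiv:2510.15916 — 4 statements merged into one kernel-verified Lean document; each statement's English description precedes it below -/
import Mathlib

section
/- Telescoping formula: if Z is a consistent IPR with respect to u, then the values v_k = z_{kn} satisfy v_k + (n-k-1)·u = Σ_{i=k}^{n-1} z_{i(i+1)} for all k = 1,...,n-1, where multiplication of an interval by a nonnegative integer m means the m-fold Minkowski sum. -/
/-! Consistency along the chain `i → i + 1 → n` trades `z i n + u` for `z i (i + 1) + z (i + 1) n`;
descending induction on `i` collects the steps, one copy of `u` per step after the first. -/

/-- Minkowski (interval) addition: componentwise addition of endpoints. -/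
def Iadd (x y : ℝ × ℝ) : ℝ × ℝ := (x.1 + y.1, x.2 + y.2)

/-- Interval negation: -[a,b] = [-b,-a]. -/
def Ineg (x : ℝ × ℝ) : ℝ × ℝ := (-x.2, -x.1)

/-- Scalar multiple of an interval by a nonnegative integer (m-fold Minkowski sum):
m·[a,b] = [m·a, m·b]. -/
def Ismul (m : ℕ) (x : ℝ × ℝ) : ℝ × ℝ := ((m : ℝ) * x.1, (m : ℝ) * x.2)

open Finset

theorem Iadd_eq_add (x y : ℝ × ℝ) : Iadd x y = x + y := rfl

theorem Ismul_eq_nsmul (m : ℕ) (x : ℝ × ℝ) : Ismul m x = m • x := by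
  ext <;> simp [Ismul]

theorem add_nsmul_eq_sum_Ico_of_consistent {M : Type*} [AddCommMonoid M] {z : ℕ → ℕ → M}
    {u : M} {n k : ℕ} (hcons : ∀ i, k ≤ i → i + 1 < n → z i n + u = z i (i + 1) + z (i + 1) n)
    (hk : k < n) : z k n + (n - k - 1) • u = ∑ i ∈ Finset.Ico k n, z i (i + 1) := by
  obtain ⟨d, hd⟩ : ∃ d, n = k + d + 1 := ⟨n - k - 1, by omega⟩
  induction d generalizing k with
  | zero => simp [show n = k + 1 by omega]
  | succ d ih =>
    have ih' := ih (k := k + 1) (fun i hi hin => hcons i (by omega) hin) (by omega) (by omega)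
    calc z k n + (n - k - 1) • u
        = (z k n + u) + (n - (k + 1) - 1) • u := by
          rw [add_assoc, ← succ_nsmul']; congr 2; omega
      _ = z k (k + 1) + (z (k + 1) n + (n - (k + 1) - 1) • u) := by
          rw [hcons k le_rfl (by omega), add_assoc]
      _ = ∑ i ∈ Finset.Ico k n, z i (i + 1) := by
          rw [ih', sum_eq_sum_Ico_succ_bot hk]

theorem telescoping_formula_general (n : ℕ) (z : ℕ → ℕ → ℝ × ℝ) (ε : ℝ)
    (hcons : ∀ i j k, 1 ≤ i → i ≤ n → 1 ≤ j → j ≤ n → 1 ≤ k → k ≤ n →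
      Iadd (z i j) (-ε, ε) = Iadd (z i k) (z k j)) :
    ∀ k, 1 ≤ k → k ≤ n - 1 →
      Iadd (z k n) (Ismul (n - k - 1) (-ε, ε)) =
        ∑ i ∈ Finset.Icc k (n - 1), z i (i + 1) := by
  intro k hk1 hkn
  have hIcc : Icc k (n - 1) = Finset.Ico k n := by
    rw [← Ico_add_one_right_eq_Icc, Nat.sub_add_cancel (by omega)]
  rw [hIcc, Iadd_eq_add, Ismul_eq_nsmul]
  refine add_nsmul_eq_sum_Ico_of_consistent (fun i hi hin => ?_) (by omega)
  simpa only [Iadd_eq_add] using hcons i n (i + 1) (by omega) (by omega) (by omega) le_rfl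
    (by omega) (by omega)

/-- telescoping: for a consistent IPR (objects indexed 1..n),
v_k = z_{kn} satisfies v_k + (n-k-1)·u = Σ_{i=k}^{n-1} z_{i(i+1)}
for k = 1,...,n-1. -/
theorem telescoping_formula (n : ℕ) (hn : 2 ≤ n) (z : ℕ → ℕ → ℝ × ℝ) (ε : ℝ) (hε : 0 ≤ ε)
    (hvalid : ∀ i j, 1 ≤ i → i ≤ n → 1 ≤ j → j ≤ n → (z i j).1 ≤ (z i j).2)
    (hrec : ∀ i j, 1 ≤ i → i ≤ n → 1 ≤ j → j ≤ n → z i j = Ineg (z j i))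
    (hcons : ∀ i j k, 1 ≤ i → i ≤ n → 1 ≤ j → j ≤ n → 1 ≤ k → k ≤ n →
      Iadd (z i j) (-ε, ε) = Iadd (z i k) (z k j)) :
    ∀ k, 1 ≤ k → k ≤ n - 1 →
      Iadd (z k n) (Ismul (n - k - 1) (-ε, ε)) =
        ∑ i ∈ Finset.Icc k (n - 1), z i (i + 1) :=
  telescoping_formula_general n z ε hcons
end

section
/- For a consistent IPR with respect to u = [-ε,ε], the top value v₁ = z_{1n} satisfies v₁⁻ = C⁻ + (n-2)ε and v₁⁺ = C⁺ - (n-2)ε, where C⁻ = Σ_{i=1}^{n-1} z_{i(i+1)}⁻ and C⁺ = Σ_{i=1}^{n-1} z_{i(i+1)}⁺. -/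
theorem eq_sum_adjacent_sub_of_chain {a : ℕ → ℕ → ℝ} {c : ℝ} {n : ℕ} (hn : 2 ≤ n)
    (hchain : ∀ k, 2 ≤ k → k < n → a 1 (k + 1) + c = a 1 k + a k (k + 1)) :
    a 1 n = ∑ i ∈ Finset.Ico 1 n, a i (i + 1) - ((n : ℝ) - 2) * c := by
  induction n, hn using Nat.le_induction with
  | base => simp
  | succ m hm ih =>
    have hprefix := ih fun k h2 hk => hchain k h2 (by omega)
    have hlast := hchain m hm (by omega)
    rw [Finset.sum_Ico_succ_top (by omega)]
    push_cast
    linarith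

theorem top_value_endpoints_general (n : ℕ) (hn : 2 ≤ n) (z : ℕ → ℕ → ℝ × ℝ) (ε : ℝ)
    (hcons : ∀ i j k, 1 ≤ i → i ≤ n → 1 ≤ j → j ≤ n → 1 ≤ k → k ≤ n →
      Iadd (z i j) (-ε, ε) = Iadd (z i k) (z k j)) :
    (z 1 n).1 = (∑ i ∈ Finset.Icc 1 (n - 1), (z i (i + 1)).1) + ((n : ℝ) - 2) * ε ∧
    (z 1 n).2 = (∑ i ∈ Finset.Icc 1 (n - 1), (z i (i + 1)).2) - ((n : ℝ) - 2) * ε := by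
  have hchain : ∀ k, 2 ≤ k → k < n → Iadd (z 1 (k + 1)) (-ε, ε) = Iadd (z 1 k) (z k (k + 1)) :=
    fun k h2 hk => hcons 1 (k + 1) k le_rfl (by omega) (by omega) hk (by omega) hk.le
  have hIcc : Finset.Icc 1 (n - 1) = Finset.Ico 1 n :=
    Finset.Icc_sub_one_right_eq_Ico_of_not_isMin
      (by simp only [isMin_iff_eq_bot, Nat.bot_eq_zero]; omega) 1
  have hlower := eq_sum_adjacent_sub_of_chain (a := fun i j => (z i j).1) hn
    fun k h2 hk => congrArg Prod.fst (hchain k h2 hk)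
  have hupper := eq_sum_adjacent_sub_of_chain (a := fun i j => (z i j).2) hn
    fun k h2 hk => congrArg Prod.snd (hchain k h2 hk)
  rw [hIcc]
  constructor
  · linarith
  · exact hupper

/-- for a consistent IPR (objects 1..n), the top value v₁ = z_{1n}
satisfies v₁⁻ = C⁻ + (n-2)ε and v₁⁺ = C⁺ - (n-2)ε, where
C± = Σ_{i=1}^{n-1} z_{i(i+1)}±. -/
theorem top_value_endpoints (n : ℕ) (hn : 2 ≤ n) (z : ℕ → ℕ → ℝ × ℝ) (ε : ℝ) (hε : 0 ≤ ε)
    (hvalid : ∀ i j, 1 ≤ i → i ≤ n → 1 ≤ j → j ≤ n → (z i j).1 ≤ (z i j).2)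
    (hrec : ∀ i j, 1 ≤ i → i ≤ n → 1 ≤ j → j ≤ n → z i j = Ineg (z j i))
    (hcons : ∀ i j k, 1 ≤ i → i ≤ n → 1 ≤ j → j ≤ n → 1 ≤ k → k ≤ n →
      Iadd (z i j) (-ε, ε) = Iadd (z i k) (z k j)) :
    (z 1 n).1 = (∑ i ∈ Finset.Icc 1 (n - 1), (z i (i + 1)).1) + ((n : ℝ) - 2) * ε ∧
    (z 1 n).2 = (∑ i ∈ Finset.Icc 1 (n - 1), (z i (i + 1)).2) - ((n : ℝ) - 2) * ε :=
  top_value_endpoints_general n hn z ε hcons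
end

section
/- Crisp reduction theorem: an IPR Z is consistent with respect to u = [-ε,ε] if and only if the real matrix X with x_{ij} = (z_{ij}⁻ + z_{ij}⁺)/2 satisfies x_{ij} = x_{ik} + x_{kj} for all i,j,k and every entry of Z has the form z_{ij} = [x_{ij} - ε, x_{ij} + ε]. -/
noncomputable def Imid (x : ℝ × ℝ) : ℝ := (x.1 + x.2) / 2

theorem Imid_Iadd (x y : ℝ × ℝ) : Imid (Iadd x y) = Imid x + Imid y := by
  simp only [Imid, Iadd]
  ring

theorem Imid_neg_self (ε : ℝ) : Imid (-ε, ε) = 0 := by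
  simp [Imid]

theorem eq_Imid_sub_Imid_add_of_width {x : ℝ × ℝ} {ε : ℝ} (h : x.2 - x.1 = 2 * ε) :
    x = (Imid x - ε, Imid x + ε) := by
  ext <;> simp only [Imid] <;> linarith

section Consistency

variable {ι : Type*}

def IsConsistent (z : ι → ι → ℝ × ℝ) (u : ℝ × ℝ) : Prop :=
  ∀ i j k, Iadd (z i j) u = Iadd (z i k) (z k j)

variable {z : ι → ι → ℝ × ℝ} {u : ℝ × ℝ}

theorem IsConsistent.diag_eq (h : IsConsistent z u) (i : ι) : z i i = u := by
  have h' := Prod.ext_iff.mp (h i i i)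
  simp only [Iadd] at h'
  ext <;> linarith [h'.1, h'.2]

theorem IsConsistent.Imid_add (h : IsConsistent z u) (i j k : ι) :
    Imid (z i j) + Imid u = Imid (z i k) + Imid (z k j) := by
  simpa only [Imid_Iadd] using congrArg Imid (h i j k)

theorem IsConsistent.width_eq (h : IsConsistent z u) (hrec : ∀ i j, z i j = Ineg (z j i))
    (i j : ι) : (z i j).2 - (z i j).1 = u.2 - u.1 := by
  have h' := Prod.ext_iff.mp (h i i j)
  rw [h.diag_eq i, hrec j i] at h'
  simp only [Iadd, Ineg] at h'
  linarith [h'.1, h'.2]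

theorem isConsistent_ball {c : ι → ι → ℝ} (hc : ∀ i j k, c i j = c i k + c k j) (ε : ℝ) :
    IsConsistent (fun i j => (c i j - ε, c i j + ε)) (-ε, ε) := by
  intro i j k
  simp only [Iadd, hc i j k, Prod.mk.injEq]
  constructor <;> ring

end Consistency

theorem crisp_reduction_general {n : ℕ} (z : Fin n → Fin n → ℝ × ℝ) (ε : ℝ)
    (hrec : ∀ i j, z i j = Ineg (z j i)) :
    (∀ i j k, Iadd (z i j) (-ε, ε) = Iadd (z i k) (z k j)) ↔
      ((∀ i j k, ((z i j).1 + (z i j).2) / 2 =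
          ((z i k).1 + (z i k).2) / 2 + ((z k j).1 + (z k j).2) / 2) ∧
        ∀ i j, z i j =
          (((z i j).1 + (z i j).2) / 2 - ε, ((z i j).1 + (z i j).2) / 2 + ε)) := by
  change IsConsistent z (-ε, ε) ↔ (∀ i j k, Imid (z i j) = Imid (z i k) + Imid (z k j)) ∧
    ∀ i j, z i j = (Imid (z i j) - ε, Imid (z i j) + ε)
  constructor
  · intro hcons
    refine ⟨fun i j k => ?_, fun i j => eq_Imid_sub_Imid_add_of_width ?_⟩
    · simpa only [Imid_neg_self, add_zero] using hcons.Imid_add i j k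
    · linarith [hcons.width_eq hrec i j]
  · rintro ⟨hmid, hball⟩
    have hcons := isConsistent_ball hmid ε
    rwa [← funext₂ hball] at hcons

/-- crisp reduction: a reciprocal IPR Z is consistent w.r.t.
u = [-ε,ε] iff the midpoint matrix x_{ij} = (z_{ij}⁻+z_{ij}⁺)/2 is additively
consistent and every entry satisfies z_{ij} = [x_{ij}-ε, x_{ij}+ε]. -/
theorem crisp_reduction {n : ℕ} (z : Fin n → Fin n → ℝ × ℝ) (ε : ℝ) (hε : 0 ≤ ε)
    (hvalid : ∀ i j, (z i j).1 ≤ (z i j).2)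
    (hrec : ∀ i j, z i j = Ineg (z j i)) :
    (∀ i j k, Iadd (z i j) (-ε, ε) = Iadd (z i k) (z k j)) ↔
      ((∀ i j k, ((z i j).1 + (z i j).2) / 2 =
          ((z i k).1 + (z i k).2) / 2 + ((z k j).1 + (z k j).2) / 2) ∧
        ∀ i j, z i j =
          (((z i j).1 + (z i j).2) / 2 - ε, ((z i j).1 + (z i j).2) / 2 + ε)) :=
  crisp_reduction_general z ε hrec
end

section
/- If Z is a consistent IPR with respect to u and z_{i(i+1)} ≥₀ u for all i = 1,...,n-1, then z_{ij} ≥₀ u for all i < j (transitive positivity of the consistent relation). -/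
/-- Componentwise partial order ≤₀ on intervals. -/
def Ile (x y : ℝ × ℝ) : Prop := x.1 ≤ y.1 ∧ x.2 ≤ y.2

theorem Ile.iadd {a b c d : ℝ × ℝ} (hab : Ile a b) (hcd : Ile c d) :
    Ile (Iadd a c) (Iadd b d) :=
  ⟨add_le_add hab.1 hcd.1, add_le_add hab.2 hcd.2⟩

theorem Ile.of_iadd_right {a b c : ℝ × ℝ} (h : Ile (Iadd a c) (Iadd b c)) : Ile a b :=
  ⟨le_of_add_le_add_right h.1, le_of_add_le_add_right h.2⟩

theorem transitive_positivity_general (n : ℕ) (z : ℕ → ℕ → ℝ × ℝ) (ε : ℝ)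
    (hcons : ∀ i j k, 1 ≤ i → i ≤ n → 1 ≤ j → j ≤ n → 1 ≤ k → k ≤ n →
      Iadd (z i j) (-ε, ε) = Iadd (z i k) (z k j))
    (hord : ∀ i, 1 ≤ i → i ≤ n - 1 → Ile (-ε, ε) (z i (i + 1))) :
    ∀ i j, 1 ≤ i → i < j → j ≤ n → Ile (-ε, ε) (z i j) := by
  intro i j hi hij hjn
  induction j, hij using Nat.le_induction with
  | base => exact hord i hi (by omega)
  | succ j hij ih =>
    -- u + u ≤₀ z_{ij} + z_{j(j+1)} = z_{i(j+1)} + u, and u cancels.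
    have hsum : Ile (Iadd (-ε, ε) (-ε, ε)) (Iadd (z i (j + 1)) (-ε, ε)) := by
      rw [hcons i (j + 1) j hi (by omega) (by omega) hjn (by omega) (by omega)]
      exact (ih (by omega)).iadd (hord j (by omega) (by omega))
    exact hsum.of_iadd_right

/-- transitive positivity: if Z (objects 1..n) is a consistent
IPR w.r.t. u = [-ε,ε] and z_{i(i+1)} ≥₀ u for i = 1,...,n-1, then z_{ij} ≥₀ u
for all i < j. -/
theorem transitive_positivity (n : ℕ) (z : ℕ → ℕ → ℝ × ℝ) (ε : ℝ) (hε : 0 ≤ ε)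
    (hvalid : ∀ i j, 1 ≤ i → i ≤ n → 1 ≤ j → j ≤ n → (z i j).1 ≤ (z i j).2)
    (hrec : ∀ i j, 1 ≤ i → i ≤ n → 1 ≤ j → j ≤ n → z i j = Ineg (z j i))
    (hcons : ∀ i j k, 1 ≤ i → i ≤ n → 1 ≤ j → j ≤ n → 1 ≤ k → k ≤ n →
      Iadd (z i j) (-ε, ε) = Iadd (z i k) (z k j))
    (hord : ∀ i, 1 ≤ i → i ≤ n - 1 → Ile (-ε, ε) (z i (i + 1))) :
    ∀ i j, 1 ≤ i → i < j → j ≤ n → Ile (-ε, ε) (z i j) :=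
  transitive_positivity_general n z ε hcons hord
end
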